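/- arXiv:1302.0543 — 3 statements merged into one kernel-verified Lean document; each statement's English description precedes it below -/
import Mathlib

section
/- Let G be a group and let x, y, z ∈ G satisfy xz = zx, yz = zy, and xy = yxz. Suppose ≤ is a relation on G that is reflexive (u ≤ u for all u), total (for all u, v: u ≤ v or v ≤ u), transitive (u ≤ v and v ≤ w imply u ≤ w), right-invariant (u ≤ v implies uw ≤ vw for all w), and satisfies the Archimedean property for z: for every u ∈ G there exists k = k(u) ∈ ℤ with z^k ≤ u ≤ z^(k+1). Then the relation ≤ is trivial: u ≤ v for all u, v ∈ G. -/
/-!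
Right invariance and the centrality of `z` make `z`-exponent bounds additive: if
`z ^ a ≤ u ≤ z ^ b`, `z ^ c ≤ v ≤ z ^ d` and `v` commutes with `z`, then
`z ^ (a + c) ≤ u * v ≤ z ^ (b + d)`. The Archimedean property puts `x` and `y` in windows of
width one, so both sides of `x ^ n * y ^ n = y ^ n * x ^ n * z ^ (n * n)` lie in windows of
width `2 n`, shifted against each other by `n ^ 2`. For `n = 3` this forces `z ^ 3 ≤ 1 ≤ z ^ 15`.
The exponents `k` with `1 ≤ z ^ k` form an additive submonoid of `ℤ`; it contains `-3`, `15`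
and, by totality, `1` or `-1`, hence is all of `ℤ`. So `1 ≤ z ^ k ≤ w` for every `w`.
-/

open Set

theorem Int.addSubmonoid_eq_top_of_one_mem_or_neg_one_mem (M : AddSubmonoid ℤ)
    (hM : 1 ∈ M ∨ -1 ∈ M) {p q : ℤ} (hp : p ∈ M) (hp0 : 0 < p) (hq : q ∈ M) (hq0 : q < 0) :
    M = ⊤ := by
  have hunits : 1 ∈ M ∧ -1 ∈ M := by
    rcases hM with h | h
    · obtain ⟨n, hn⟩ := Int.eq_ofNat_of_zero_le (show 0 ≤ -q - 1 by omega)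
      refine ⟨h, ?_⟩
      convert M.add_mem hq (M.nsmul_mem h n) using 1
      rw [nsmul_one, ← hn]
      ring
    · obtain ⟨n, hn⟩ := Int.eq_ofNat_of_zero_le (show 0 ≤ p - 1 by omega)
      refine ⟨?_, h⟩
      convert M.add_mem hp (M.nsmul_mem h n) using 1
      rw [nsmul_eq_mul, ← hn]
      ring
  refine (AddSubmonoid.eq_top_iff' M).2 fun k => ?_
  induction k using Int.induction_on with
  | zero => exact M.zero_mem
  | succ k ih => exact M.add_mem ih hunits.1
  | pred k ih => exact sub_eq_add_neg (-(k : ℤ)) 1 ▸ M.add_mem ih hunits.2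

theorem pow_mul_pow_of_mul_eq_mul_mul {M : Type*} [Monoid M] {x y z : M} (hxz : Commute x z)
    (hyz : Commute y z) (hxy : x * y = y * x * z) (m n : ℕ) :
    x ^ m * y ^ n = y ^ n * x ^ m * z ^ (m * n) := by
  have hsemi : SemiconjBy x (y ^ n) (y ^ n * z ^ n) := by
    have : SemiconjBy x y (y * z) := by
      rw [SemiconjBy, hxy, mul_assoc, hxz.eq, ← mul_assoc]
    simpa only [hyz.mul_pow] using this.pow_right n
  induction m with
  | zero => simp
  | succ m ih =>
    have hcomm : Commute x (z ^ (m * n) * z ^ n) := (hxz.pow_right _).mul_right (hxz.pow_right n)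
    calc x ^ (m + 1) * y ^ n = x ^ m * (x * y ^ n) := by rw [pow_succ, mul_assoc]
      _ = y ^ n * x ^ m * (z ^ (m * n) * z ^ n * x) := by
        rw [hsemi.eq, ← mul_assoc, ← mul_assoc, ih]; simp only [mul_assoc]
      _ = y ^ n * x ^ (m + 1) * z ^ ((m + 1) * n) := by
        rw [← hcomm.eq, ← pow_add, ← Nat.succ_mul, pow_succ]; simp only [mul_assoc]

section RightMono

variable {G : Type*} [Group G] [Preorder G] [MulRightMono G] {z u v : G} {a b c d : ℤ}

theorem one_le_zpow_sub_of_zpow_le_zpow (h : z ^ a ≤ z ^ b) : 1 ≤ z ^ (b - a) := by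
  rw [zpow_sub]
  exact le_mul_inv_iff_le.2 h

variable (z) in
def oneLeZPowExponents : AddSubmonoid ℤ where
  carrier := {k | 1 ≤ z ^ k}
  zero_mem' := (zpow_zero z).ge
  add_mem' {a b} ha hb := by
    rw [mem_ofPred, zpow_add]
    exact Right.one_le_mul ha hb

@[simp]
theorem mem_oneLeZPowExponents {k : ℤ} : k ∈ oneLeZPowExponents z ↔ 1 ≤ z ^ k := Iff.rfl

theorem Commute.mul_mem_Icc_zpow (hvz : Commute v z) (hu : u ∈ Icc (z ^ a) (z ^ b))
    (hv : v ∈ Icc (z ^ c) (z ^ d)) : u * v ∈ Icc (z ^ (a + c)) (z ^ (b + d)) := by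
  have hvzk (k : ℤ) : v * z ^ k = z ^ k * v := (hvz.zpow_right k).eq
  constructor
  · calc z ^ (a + c) = z ^ c * z ^ a := by rw [← zpow_add, add_comm]
      _ ≤ v * z ^ a := mul_le_mul_left hv.1 _
      _ = z ^ a * v := hvzk a
      _ ≤ u * v := mul_le_mul_left hu.1 _
  · calc u * v ≤ z ^ b * v := mul_le_mul_left hu.2 _
      _ = v * z ^ b := (hvzk b).symm
      _ ≤ z ^ d * z ^ b := mul_le_mul_left hv.2 _
      _ = z ^ (b + d) := by rw [← zpow_add, add_comm]

theorem Commute.pow_mem_Icc_zpow (huz : Commute u z) (hu : u ∈ Icc (z ^ a) (z ^ b)) (n : ℕ) :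
    u ^ n ∈ Icc (z ^ (n * a)) (z ^ (n * b)) := by
  induction n with
  | zero => simp
  | succ n ih =>
    rw [pow_succ, Nat.cast_succ, add_one_mul, add_one_mul]
    exact huz.mul_mem_Icc_zpow ih hu

theorem heisenberg_one_le_zpow {x y : G} (hxz : Commute x z) (hyz : Commute y z)
    (hxy : x * y = y * x * z) (hx : x ∈ Icc (z ^ a) (z ^ (a + 1)))
    (hy : y ∈ Icc (z ^ b) (z ^ (b + 1))) (n : ℕ) :
    1 ≤ z ^ (2 * n - n ^ 2 : ℤ) ∧ 1 ≤ z ^ (n ^ 2 + 2 * n : ℤ) := by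
  have hxn := hxz.pow_mem_Icc_zpow hx n
  have hyn := hyz.pow_mem_Icc_zpow hy n
  have hxy_n := (hyz.pow_left n).mul_mem_Icc_zpow hxn hyn
  have hyx_n := ((Commute.refl z).zpow_left (n * n)).mul_mem_Icc_zpow
    ((hxz.pow_left n).mul_mem_Icc_zpow hyn hxn) (left_mem_Icc.2 le_rfl)
  rw [← Nat.cast_mul, zpow_natCast, ← pow_mul_pow_of_mul_eq_mul_mul hxz hyz hxy] at hyx_n
  constructor
  · convert one_le_zpow_sub_of_zpow_le_zpow (hyx_n.1.trans hxy_n.2) using 2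
    push_cast; ring
  · convert one_le_zpow_sub_of_zpow_le_zpow (hxy_n.1.trans hyx_n.2) using 2
    push_cast; ring

theorem le_of_forall_one_le_zpow (hz : ∀ k : ℤ, 1 ≤ z ^ k) (h : ∀ w, ∃ k : ℤ, z ^ k ≤ w)
    (u v : G) : u ≤ v := by
  obtain ⟨k, hk⟩ := h (v * u⁻¹)
  exact le_mul_inv_iff_le.1 ((hz k).trans hk)

end RightMono

/-- A reflexive, total, transitive, right-invariant relation on a group
containing elements `x y z` with the Heisenberg relations, satisfying the
Archimedean property with respect to `z`, is trivial. -/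
theorem heisenberg_order_trivial {G : Type*} [Group G] (x y z : G)
    (hxz : x * z = z * x) (hyz : y * z = z * y) (hxy : x * y = y * x * z)
    (le : G → G → Prop)
    (hrefl : ∀ u, le u u)
    (htotal : ∀ u v, le u v ∨ le v u)
    (htrans : ∀ u v w, le u v → le v w → le u w)
    (hrinv : ∀ u v w, le u v → le (u * w) (v * w))
    (harch : ∀ u : G, ∃ k : ℤ, le (z ^ k) u ∧ le u (z ^ (k + 1))) :
    ∀ u v : G, le u v := by
  let _ : Preorder G := { le, le_refl := hrefl, le_trans := htrans }
  have : MulRightMono G := ⟨fun w _ _ h => hrinv _ _ w h⟩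
  obtain ⟨a, hx⟩ := harch x
  obtain ⟨b, hy⟩ := harch y
  obtain ⟨hneg, hpos⟩ := heisenberg_one_le_zpow hxz hyz hxy hx hy 3
  have hneg : -3 ∈ oneLeZPowExponents z :=
    mem_oneLeZPowExponents.2 (by convert hneg using 2; norm_num)
  have hpos : 15 ∈ oneLeZPowExponents z :=
    mem_oneLeZPowExponents.2 (by convert hpos using 2; norm_num)
  have hunit : 1 ∈ oneLeZPowExponents z ∨ -1 ∈ oneLeZPowExponents z := by
    rcases htotal z 1 with h | h
    · have h : z ^ (1 : ℤ) ≤ z ^ (0 : ℤ) := by rw [zpow_one, zpow_zero]; exact h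
      exact .inr (one_le_zpow_sub_of_zpow_le_zpow h)
    · left
      rw [mem_oneLeZPowExponents, zpow_one]
      exact h
  have hexp := Int.addSubmonoid_eq_top_of_one_mem_or_neg_one_mem _ hunit hpos (by norm_num) hneg
    (by norm_num)
  refine le_of_forall_one_le_zpow (fun k => ?_) fun w => (harch w).imp fun _ => And.left
  exact mem_oneLeZPowExponents.1 (hexp ▸ AddSubmonoid.mem_top k)
end

section
/- Let G be a group, z ∈ G, and let ≤ be a relation on G that is reflexive (u ≤ u for all u), total (for all u, v: u ≤ v or v ≤ u), transitive (u ≤ v and v ≤ w imply u ≤ w), and right-invariant (u ≤ v implies uw ≤ vw for all w). If z^(n^2) ≤ z^(2n) for every integer n, then z^(k₁) ≤ z^(k₂) for all integers k₁, k₂. -/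
/-!
Right invariance gives `z ^ (n ^ 2 - 2 * n) ≤ 1` for every `n`, and the set of exponents `k`
with `z ^ k ≤ 1` is closed under addition. Taking `n = 1` and `n = 3` puts `-1` and `3` in it,
hence `1 = 3 - 1 - 1`, hence every integer; finally `z ^ (k₁ - k₂) ≤ 1` gives `z ^ k₁ ≤ z ^ k₂`.
-/

theorem Int.mem_of_add_mem_of_one_mem_of_neg_one_mem {S : Set ℤ}
    (hadd : ∀ a ∈ S, ∀ b ∈ S, a + b ∈ S) (h1 : 1 ∈ S) (hm1 : -1 ∈ S) (k : ℤ) : k ∈ S := by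
  induction k using Int.induction_on with
  | zero => simpa using hadd 1 h1 (-1) hm1
  | succ n ih => exact hadd n ih 1 h1
  | pred n ih => simpa [sub_eq_add_neg] using hadd _ ih (-1) hm1

section RightInvariant

variable {G : Type*} [Group G] {le : G → G → Prop}

theorem mul_inv_le_one_of_le (hrinv : ∀ u v w, le u v → le (u * w) (v * w)) {u v : G}
    (h : le u v) : le (u * v⁻¹) 1 := by
  simpa using hrinv u v v⁻¹ h

theorem le_of_mul_inv_le_one (hrinv : ∀ u v w, le u v → le (u * w) (v * w)) {u v : G}
    (h : le (u * v⁻¹) 1) : le u v := by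
  simpa using hrinv _ _ v h

theorem mul_le_one_of_le_one (htrans : ∀ u v w, le u v → le v w → le u w)
    (hrinv : ∀ u v w, le u v → le (u * w) (v * w)) {a b : G}
    (ha : le a 1) (hb : le b 1) : le (a * b) 1 :=
  htrans _ _ _ (hrinv a 1 b ha) (by simpa using hb)

end RightInvariant

theorem power_order_trivial_general {G : Type*} [Group G] (z : G)
    (le : G → G → Prop)
    (htrans : ∀ u v w, le u v → le v w → le u w)
    (hrinv : ∀ u v w, le u v → le (u * w) (v * w))
    (hz : ∀ n : ℤ, le (z ^ (n ^ 2)) (z ^ (2 * n))) :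
    ∀ k₁ k₂ : ℤ, le (z ^ k₁) (z ^ k₂) := by
  set S : Set ℤ := {k | le (z ^ k) 1}
  have hadd : ∀ a ∈ S, ∀ b ∈ S, a + b ∈ S := fun a ha b hb => by
    simpa only [S, Set.mem_ofPred_eq, zpow_add] using mul_le_one_of_le_one htrans hrinv ha hb
  have hsq : ∀ n : ℤ, n ^ 2 - 2 * n ∈ S := fun n => by
    simpa only [S, Set.mem_ofPred_eq, zpow_sub] using mul_inv_le_one_of_le hrinv (hz n)
  have hm1 : -1 ∈ S := by simpa using hsq 1
  have h3 : 3 ∈ S := by simpa using hsq 3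
  have h1 : 1 ∈ S := by simpa using hadd _ (hadd _ h3 _ hm1) _ hm1
  intro k₁ k₂
  apply le_of_mul_inv_le_one hrinv
  rw [← zpow_sub]
  exact Int.mem_of_add_mem_of_one_mem_of_neg_one_mem hadd h1 hm1 _

/-- If a reflexive, total, transitive, right-invariant relation on a group
satisfies `z^(n²) ≤ z^(2n)` for every integer `n`, then `z^(k₁) ≤ z^(k₂)`
for all integers `k₁, k₂`. -/
theorem power_order_trivial {G : Type*} [Group G] (z : G)
    (le : G → G → Prop)
    (hrefl : ∀ u, le u u)
    (htotal : ∀ u v, le u v ∨ le v u)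
    (htrans : ∀ u v w, le u v → le v w → le u w)
    (hrinv : ∀ u v w, le u v → le (u * w) (v * w))
    (hz : ∀ n : ℤ, le (z ^ (n ^ 2)) (z ^ (2 * n))) :
    ∀ k₁ k₂ : ℤ, le (z ^ k₁) (z ^ k₂) :=
  power_order_trivial_general z le htrans hrinv hz
end

section
/- Let α ∈ ℝ be irrational and k a nonzero integer. Let φ : ℝ × ℝ → ℝ be continuous such that for every x ∈ ℝ the map y ↦ φ(x, y) is a strictly increasing bijection of ℝ, and such that φ(x, y + 1) = φ(x, y) + 1 and φ(x + 1, y) = φ(x, y) + k for all x, y ∈ ℝ. Let T² = (ℝ/ℤ) × (ℝ/ℤ) with quotient map p : ℝ² → T², and let F : T² → T² be the map determined by F(p(x, y)) = p(x + α, φ(x, y)). Then F is topologically transitive: for any nonempty open sets U, V ⊆ T² there exists n ≥ 1 with Fⁿ(U) ∩ V ≠ ∅. -/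
/-!
Write `φⁿ(x, ·)` for the fibre map of `Fⁿ` over `x`. Its oscillation over any base interval `I` is
unbounded in `n`: otherwise, if it stayed below `T` on `I` for every `n`, then moving `I` by the
rotation and using the cocycle identity, together with the fact that every `φⁿ(x, ·)` lifts a
degree-one circle map, would bound it by `2T + 2` on every interval of half the length of `I`,
which contradicts `φⁿ(x + 1, y) = φⁿ(x, y) + nk`. By the intermediate value theorem, some forward
image of a short horizontal segment in `U` therefore crosses every horizontal circle above a short
base interval. Letting the segment shrink shows that the closure of the forward orbit of `U`
contains a whole vertical circle. `F` is continuous and maps vertical circles onto vertical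
circles, so this closure contains the vertical circles over a forward orbit of the rotation. That
orbit is dense, so the forward orbit of `U` is dense and meets `V`.
-/

open Set Filter Topology

theorem CircleDeg1Lift.abs_map_sub_map_sub_sub_le_one (f : CircleDeg1Lift) (x y : ℝ) :
    |f y - f x - (y - x)| ≤ 1 := by
  set j := ⌊y - x⌋
  have hj₁ : (j : ℝ) ≤ y - x := Int.floor_le _
  have hj₂ : y - x < j + 1 := Int.lt_floor_add_one _
  have hlo : f x + j ≤ f y := by
    rw [← f.map_add_int]; exact f.monotone (by linarith)
  have hhi : f y ≤ f x + (j + 1 : ℤ) := by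
    rw [← f.map_add_int]; exact f.monotone (by push_cast; linarith)
  push_cast at hhi
  rw [abs_le]; constructor <;> linarith

def liftCocycle (Φ : ℝ → CircleDeg1Lift) (α : ℝ) : ℕ → ℝ → CircleDeg1Lift
  | 0, _ => 1
  | n + 1, x => Φ (x + n * α) * liftCocycle Φ α n x

section Cocycle

variable (Φ : ℝ → CircleDeg1Lift) (α : ℝ)

theorem liftCocycle_add (m n : ℕ) (x : ℝ) :
    liftCocycle Φ α (m + n) x = liftCocycle Φ α n (x + m * α) * liftCocycle Φ α m x := by
  induction n with
  | zero => simp [liftCocycle]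
  | succ n ih =>
    rw [← add_assoc, liftCocycle, ih, liftCocycle, ← mul_assoc]
    congr 3
    push_cast
    ring

theorem continuous_liftCocycle (hΦ : Continuous fun q : ℝ × ℝ => Φ q.1 q.2) (n : ℕ) :
    Continuous fun q : ℝ × ℝ => liftCocycle Φ α n q.1 q.2 := by
  induction n with
  | zero => simpa [liftCocycle] using continuous_snd
  | succ n ih =>
    simp only [liftCocycle, CircleDeg1Lift.mul_apply]
    exact hΦ.comp ((continuous_fst.add continuous_const).prodMk ih)

variable {Φ} {k : ℤ}

theorem liftCocycle_add_one (htwist : ∀ x y, Φ (x + 1) y = Φ x y + k) (n : ℕ) (x y : ℝ) :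
    liftCocycle Φ α n (x + 1) y = liftCocycle Φ α n x y + n * k := by
  induction n with
  | zero => simp [liftCocycle]
  | succ n ih =>
    have hshift : x + 1 + n * α = x + n * α + 1 := by ring
    simp only [liftCocycle, CircleDeg1Lift.mul_apply, ih, hshift, htwist]
    rw [show (n : ℝ) * k = ((n * k : ℤ) : ℝ) by push_cast; ring, CircleDeg1Lift.map_add_int]
    push_cast
    ring

theorem liftCocycle_add_int (htwist : ∀ x y, Φ (x + 1) y = Φ x y + k) (n : ℕ) (x y : ℝ)
    (j : ℤ) :
    liftCocycle Φ α n (x + j) y = liftCocycle Φ α n x y + j * (n * k) := by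
  let g : AddConstMap ℝ ℝ 1 ((n : ℝ) * k) :=
    ⟨fun x => liftCocycle Φ α n x y, fun x => liftCocycle_add_one α htwist n x y⟩
  rw [← zsmul_eq_mul]
  exact AddConstMapClass.map_add_int' g x j

end Cocycle

theorem abs_sub_le_mul_of_forall_abs_add_sub_le {g : ℝ → ℝ} {h C : ℝ}
    (hg : ∀ u, |g (u + h) - g u| ≤ C) (x : ℝ) (i : ℕ) :
    |g (x + i * h) - g x| ≤ i * C := by
  induction i with
  | zero => simp
  | succ i ih =>
    have hstep := hg (x + i * h)
    rw [add_assoc, ← add_one_mul] at hstep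
    push_cast
    linarith [abs_sub_le (g (x + (i + 1) * h)) (g (x + i * h)) (g x)]

theorem exists_add_int_mem_uIcc {a b : ℝ} (h : 1 ≤ |b - a|) (t : ℝ) :
    ∃ i : ℤ, t + i ∈ uIcc a b := by
  refine ⟨⌈min a b - t⌉, ?_, ?_⟩
  · linarith [Int.le_ceil (min a b - t)]
  · have := max_sub_min_eq_abs' b a
    rw [max_comm, min_comm] at this
    linarith [Int.ceil_lt_add_one (min a b - t)]

theorem Irrational.denseRange_nsmul_coe {α : ℝ} (hα : Irrational α) :
    DenseRange fun m : ℕ => m • (α : UnitAddCircle) :=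
  denseRange_zsmul_iff_nsmul.1 (AddCircle.denseRange_zsmul_coe_iff.2 (by simpa using hα))

theorem Irrational.exists_nat_abs_add_mul_sub_int_lt {α : ℝ} (hα : Irrational α) (x u : ℝ)
    {δ : ℝ} (hδ : 0 < δ) : ∃ m : ℕ, ∃ i : ℤ, |x + m * α - (u + i)| < δ := by
  obtain ⟨m, hm⟩ := hα.denseRange_nsmul_coe.exists_dist_lt ((u - x : ℝ) : UnitAddCircle) hδ
  refine ⟨m, round (m * α - (u - x)), ?_⟩
  rw [dist_comm, dist_eq_norm, ← AddCircle.coe_nsmul, ← AddCircle.coe_sub, nsmul_eq_mul,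
    UnitAddCircle.norm_eq] at hm
  convert hm using 2
  ring

section Oscillation

variable {Φ : ℝ → CircleDeg1Lift} {α : ℝ} {k : ℤ}

theorem abs_liftCocycle_sub_le_of_forall_mem_Icc (hα : Irrational α)
    (htwist : ∀ x y, Φ (x + 1) y = Φ x y + k) {a ε T c : ℝ} (hε : 0 < ε)
    (hT : ∀ n, ∀ x₁ ∈ Icc a (a + ε), ∀ x₂ ∈ Icc a (a + ε),
      |liftCocycle Φ α n x₂ c - liftCocycle Φ α n x₁ c| ≤ T)
    (n : ℕ) {u₁ u₂ : ℝ} (hu : |u₂ - u₁| ≤ ε / 2) :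
    |liftCocycle Φ α n u₂ c - liftCocycle Φ α n u₁ c| ≤ 2 * T + 2 := by
  obtain ⟨m, i, hm⟩ :=
    hα.exists_nat_abs_add_mul_sub_int_lt a ((u₁ + u₂ - ε) / 2) (by positivity : 0 < ε / 4)
  rw [abs_le] at hu
  rw [abs_lt] at hm
  have hx₁ : u₁ - m * α + i ∈ Icc a (a + ε) := by constructor <;> linarith
  have hx₂ : u₂ - m * α + i ∈ Icc a (a + ε) := by constructor <;> linarith
  have hsplit : ∀ u, liftCocycle Φ α (m + n) (u - m * α + i) c =
      liftCocycle Φ α n u (liftCocycle Φ α m (u - m * α + i) c) + i * (n * k) := fun u => by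
    rw [liftCocycle_add, CircleDeg1Lift.mul_apply, show u - m * α + i + m * α = u + i by ring,
      liftCocycle_add_int α htwist]
  have hbig := hT (m + n) _ hx₁ _ hx₂
  have hsmall := hT m _ hx₁ _ hx₂
  rw [hsplit, hsplit] at hbig
  have hband₁ := (liftCocycle Φ α n u₁).abs_map_sub_map_sub_sub_le_one c
    (liftCocycle Φ α m (u₁ - m * α + i) c)
  have hband₂ := (liftCocycle Φ α n u₂).abs_map_sub_map_sub_sub_le_one c
    (liftCocycle Φ α m (u₂ - m * α + i) c)
  rw [abs_le] at hbig hsmall hband₁ hband₂ ⊢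
  constructor <;> linarith

theorem exists_lt_abs_liftCocycle_sub (hα : Irrational α) (hk : k ≠ 0)
    (htwist : ∀ x y, Φ (x + 1) y = Φ x y + k) (a c T : ℝ) {ε : ℝ} (hε : 0 < ε) :
    ∃ n, ∃ x₁ ∈ Icc a (a + ε), ∃ x₂ ∈ Icc a (a + ε),
      T < |liftCocycle Φ α n x₂ c - liftCocycle Φ α n x₁ c| := by
  by_contra! hT
  obtain ⟨N, hN⟩ := exists_nat_gt (2 / ε)
  have hN₀ : (0 : ℝ) < N := lt_trans (by positivity) hN
  have hstep : ∀ n u, |liftCocycle Φ α n (u + 1 / N) c - liftCocycle Φ α n u c| ≤ 2 * T + 2 :=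
    fun n u => abs_liftCocycle_sub_le_of_forall_mem_Icc hα htwist hε hT n <| by
      rw [add_sub_cancel_left, abs_of_pos (by positivity), div_le_div_iff₀ hN₀ two_pos]
      rw [div_lt_iff₀ hε] at hN
      linarith
  obtain ⟨n, hn⟩ := exists_nat_gt (N * (2 * T + 2))
  have hwind := abs_sub_le_mul_of_forall_abs_add_sub_le (g := fun x => liftCocycle Φ α n x c)
    (hstep n) 0 N
  rw [mul_one_div_cancel hN₀.ne', liftCocycle_add_one α htwist, add_sub_cancel_left, abs_mul,
    Nat.abs_cast] at hwind
  have hk₁ : (1 : ℝ) ≤ |(k : ℝ)| := by exact_mod_cast Int.one_le_abs hk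
  nlinarith

theorem exists_liftCocycle_eq_add_int (hα : Irrational α) (hk : k ≠ 0)
    (htwist : ∀ x y, Φ (x + 1) y = Φ x y + k) (hΦ : Continuous fun q : ℝ × ℝ => Φ q.1 q.2)
    (a c : ℝ) {ε : ℝ} (hε : 0 < ε) :
    ∃ n ≠ 0, ∀ t : ℝ, ∃ s ∈ Icc a (a + ε), ∃ i : ℤ, liftCocycle Φ α n s c = t + i := by
  obtain ⟨n, x₁, hx₁, x₂, hx₂, hosc⟩ := exists_lt_abs_liftCocycle_sub hα hk htwist a c 1 hε
  refine ⟨n, ?_, fun t => ?_⟩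
  · rintro rfl
    norm_num [liftCocycle] at hosc
  · obtain ⟨i, hi⟩ := exists_add_int_mem_uIcc hosc.le t
    have hcont : Continuous fun s => liftCocycle Φ α n s c :=
      (continuous_liftCocycle Φ α hΦ n).comp (continuous_id.prodMk continuous_const)
    obtain ⟨s, hs, hsi⟩ := intermediate_value_uIcc hcont.continuousOn hi
    exact ⟨s, uIcc_subset_Icc hx₁ hx₂ hs, i, hsi⟩

end Oscillation

theorem exists_forall_prodMk_mem_closure {X Y : Type*} [PseudoMetricSpace X] [CompactSpace X]
    [PseudoMetricSpace Y] {W : Set (X × Y)}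
    (h : ∀ ε > 0, ∃ b : X, ∀ t : Y, ∃ x, dist x b < ε ∧ (x, t) ∈ W) :
    ∃ x₀, ∀ t, (x₀, t) ∈ closure W := by
  choose b hb using fun j : ℕ => h (1 / (j + 1)) Nat.one_div_pos_of_nat
  obtain ⟨x₀, σ, hσ, hlim⟩ := CompactSpace.tendsto_subseq b
  refine ⟨x₀, fun t => Metric.mem_closure_iff.2 fun r hr => ?_⟩
  have hradius : Tendsto (fun j => 1 / ((σ j : ℝ) + 1)) atTop (𝓝 0) :=
    tendsto_one_div_add_atTop_nhds_zero_nat.comp hσ.tendsto_atTop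
  obtain ⟨j, hj₁, hj₂⟩ := ((Metric.tendsto_nhds.1 hlim _ (half_pos hr)).and
    (hradius.eventually (gt_mem_nhds (half_pos hr)))).exists
  obtain ⟨x, hx, hxW⟩ := hb (σ j) t
  refine ⟨(x, t), hxW, ?_⟩
  simp only [Function.comp_apply] at hj₁
  calc dist (x₀, t) (x, t) = dist x₀ x := by simp [Prod.dist_eq]
    _ ≤ dist x₀ (b (σ j)) + dist (b (σ j)) x := dist_triangle _ _ _
    _ < r := by rw [dist_comm x₀, dist_comm _ x]; linarith

section Torus

local notation "𝕋" => UnitAddCircle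

def IsSkewProduct (F : 𝕋 × 𝕋 → 𝕋 × 𝕋) (α : ℝ) (Φ : ℝ → CircleDeg1Lift) : Prop :=
  ∀ x y : ℝ, F ((x : 𝕋), (y : 𝕋)) = (((x + α : ℝ) : 𝕋), ((Φ x y : ℝ) : 𝕋))

namespace IsSkewProduct

variable {F : 𝕋 × 𝕋 → 𝕋 × 𝕋} {α : ℝ} {Φ : ℝ → CircleDeg1Lift} (hF : IsSkewProduct F α Φ)
include hF

theorem continuous (hΦ : Continuous fun q : ℝ × ℝ => Φ q.1 q.2) : Continuous F := by
  have hp : IsOpenQuotientMap (Prod.map (↑) (↑) : ℝ × ℝ → 𝕋 × 𝕋) :=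
    QuotientAddGroup.isOpenQuotientMap_mk.prodMap QuotientAddGroup.isOpenQuotientMap_mk
  refine hp.isQuotientMap.continuous_iff.2 ?_
  have hlift : F ∘ Prod.map (↑) (↑) =
      fun q : ℝ × ℝ => (((q.1 + α : ℝ) : 𝕋), ((Φ q.1 q.2 : ℝ) : 𝕋)) :=
    funext fun q => hF q.1 q.2
  rw [hlift]
  exact ((AddCircle.continuous_mk' 1).comp (continuous_fst.add continuous_const)).prodMk
    ((AddCircle.continuous_mk' 1).comp hΦ)

theorem iterate_coe (n : ℕ) (x y : ℝ) :
    F^[n] ((x : 𝕋), (y : 𝕋)) = (((x + n * α : ℝ) : 𝕋), ((liftCocycle Φ α n x y : ℝ) : 𝕋)) := by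
  induction n with
  | zero => simp [liftCocycle]
  | succ n ih =>
    rw [Function.iterate_succ_apply', ih, hF, liftCocycle, CircleDeg1Lift.mul_apply]
    push_cast
    ring_nf

theorem prodMk_add_mem_of_mapsTo {K : Set (𝕋 × 𝕋)} (hK : MapsTo F K K)
    (hsurj : ∀ x, Function.Surjective (Φ x)) {x : 𝕋} (hx : ∀ t, (x, t) ∈ K)
    (t : 𝕋) : (x + α, t) ∈ K := by
  obtain ⟨x, rfl⟩ := QuotientAddGroup.mk_surjective x
  obtain ⟨t, rfl⟩ := QuotientAddGroup.mk_surjective t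
  obtain ⟨y, rfl⟩ := hsurj x t
  rw [← AddCircle.coe_add, ← hF]
  exact hK (hx y)

theorem exists_forall_exists_dist_lt_mem_iUnion_iterate_image (hα : Irrational α) {k : ℤ}
    (hk : k ≠ 0) (htwist : ∀ x y, Φ (x + 1) y = Φ x y + k)
    (hΦ : Continuous fun q : ℝ × ℝ => Φ q.1 q.2)
    {U : Set (𝕋 × 𝕋)} (hU : IsOpen U) (hUne : U.Nonempty) {ε : ℝ} (hε : 0 < ε) :
    ∃ b : 𝕋, ∀ t : 𝕋, ∃ x, dist x b < ε ∧ (x, t) ∈ ⋃ n : ℕ, F^[n + 1] '' U := by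
  obtain ⟨⟨a', c'⟩, hac⟩ := hUne
  obtain ⟨a, rfl⟩ := QuotientAddGroup.mk_surjective a'
  obtain ⟨c, rfl⟩ := QuotientAddGroup.mk_surjective c'
  have hnear : ∀ᶠ s : ℝ in 𝓝 a, ((s : 𝕋), (c : 𝕋)) ∈ U :=
    ((AddCircle.continuous_mk' 1).prodMk continuous_const).continuousAt.preimage_mem_nhds
      (hU.mem_nhds hac)
  obtain ⟨δ, hδ, hsegment⟩ := Metric.eventually_nhds_iff.1 hnear
  have hη : 0 < min δ ε / 2 := by positivity
  obtain ⟨n, hn, hcurve⟩ := exists_liftCocycle_eq_add_int hα hk htwist hΦ a c hη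
  refine ⟨((a + n * α : ℝ) : 𝕋), fun t => ?_⟩
  obtain ⟨t, rfl⟩ := QuotientAddGroup.mk_surjective t
  obtain ⟨s, ⟨hs₁, hs₂⟩, i, hsi⟩ := hcurve t
  have hsη : |s - a| < min δ ε := by
    rw [abs_of_nonneg (by linarith)]; linarith
  refine ⟨((s + n * α : ℝ) : 𝕋), ?_, mem_iUnion.2 ⟨n - 1, ((s : 𝕋), (c : 𝕋)), hsegment ?_, ?_⟩⟩
  · rw [dist_eq_norm, ← AddCircle.coe_sub, add_sub_add_right_eq_sub]
    exact QuotientAddGroup.norm_mk_le_norm.trans_lt (hsη.trans_le (min_le_right _ _))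
  · rw [Real.dist_eq]; exact hsη.trans_le (min_le_left _ _)
  · rw [Nat.sub_add_cancel (Nat.one_le_iff_ne_zero.2 hn), hF.iterate_coe, hsi]
    simp

end IsSkewProduct

end Torus

/-- A skew product over an irrational rotation of the circle which is
homotopic to a nontrivial Dehn twist (twisting number `k ≠ 0`) is
topologically transitive on the 2-torus. -/
theorem dehn_twist_skew_product_transitive
    (α : ℝ) (hα : Irrational α) (k : ℤ) (hk : k ≠ 0)
    (φ : ℝ → ℝ → ℝ)
    (hφcont : Continuous fun q : ℝ × ℝ => φ q.1 q.2)
    (hφmono : ∀ x : ℝ, StrictMono (φ x))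
    (hφbij : ∀ x : ℝ, Function.Bijective (φ x))
    (hφy : ∀ x y : ℝ, φ x (y + 1) = φ x y + 1)
    (hφx : ∀ x y : ℝ, φ (x + 1) y = φ x y + k)
    (F : AddCircle (1 : ℝ) × AddCircle (1 : ℝ) →
         AddCircle (1 : ℝ) × AddCircle (1 : ℝ))
    (hF : ∀ x y : ℝ, F (↑x, ↑y) = (↑(x + α), ↑(φ x y))) :
    ∀ U V : Set (AddCircle (1 : ℝ) × AddCircle (1 : ℝ)),
      IsOpen U → U.Nonempty → IsOpen V → V.Nonempty →
      ∃ n : ℕ, 1 ≤ n ∧ ((F^[n] '' U) ∩ V).Nonempty := by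
  intro U V hU hUne hV hVne
  let Φ : ℝ → CircleDeg1Lift := fun x => ⟨⟨φ x, (hφmono x).monotone⟩, hφy x⟩
  have hskew : IsSkewProduct F α Φ := hF
  set W := ⋃ n : ℕ, F^[n + 1] '' U
  have hWF : MapsTo F W W := by
    rintro _ ⟨_, ⟨n, rfl⟩, z, hz, rfl⟩
    exact mem_iUnion.2 ⟨n + 1, z, hz, Function.iterate_succ_apply' F (n + 1) z⟩
  have hKF : MapsTo F (closure W) (closure W) :=
    hWF.closure (hskew.continuous hφcont)
  obtain ⟨x₀, hx₀⟩ := exists_forall_prodMk_mem_closure fun ε hε =>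
    hskew.exists_forall_exists_dist_lt_mem_iUnion_iterate_image hα hk hφx hφcont hU hUne hε
  have hfibres : ∀ n : ℕ, ∀ t, (x₀ + n • (α : UnitAddCircle), t) ∈ closure W := by
    intro n
    induction n with
    | zero => simpa only [Nat.cast_zero, zero_smul, add_zero] using hx₀
    | succ n ih =>
      rw [succ_nsmul, ← add_assoc]
      exact hskew.prodMk_add_mem_of_mapsTo hKF (fun x => (hφbij x).2) ih
  have horbit : DenseRange fun n : ℕ => x₀ + n • (α : UnitAddCircle) :=
    (Function.RightInverse.surjective (add_neg_cancel_left x₀)).denseRange.comp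
      hα.denseRange_nsmul_coe (continuous_const_add x₀)
  have hWdense : Dense W := by
    refine dense_iff_closure_eq.2 (eq_univ_of_univ_subset ?_)
    rw [← (horbit.prod dense_univ).closure_eq]
    exact closure_minimal (by rintro ⟨_, t⟩ ⟨⟨n, rfl⟩, -⟩; exact hfibres n t) isClosed_closure
  obtain ⟨w, hwV, hwW⟩ := hWdense.inter_open_nonempty V hV hVne
  obtain ⟨n, hn⟩ := mem_iUnion.1 hwW
  exact ⟨n + 1, Nat.le_add_left 1 n, w, hn, hwV⟩
end
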